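/- Under the strict condition on w and dz(M_k w) > 0 with k the unique maximizer of |dz(M_i w)|/(M_i 𝟙), any equilibrium input u⁰ (satisfying sat(u⁰_i) = -M_i w - M_i 𝟙·t with t = β Σ_l dz(u⁰_l)) must have t = -dz(M_k w)/(M_k 𝟙); in particular sat(u⁰_k) = -1 and |sat(u⁰_i)| < 1 for all i ≠ k. -/
import Mathlib


open Finset Matrix

noncomputable def sat (u : ℝ) : ℝ := max (min u 1) (-1)
noncomputable def dz (u : ℝ) : ℝ := u - sat u

lemma neg_one_le_sat (u : ℝ) : -1 ≤ sat u := le_max_right _ _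

lemma sat_le_one (u : ℝ) : sat u ≤ 1 := max_le (min_le_right _ _) (by norm_num)

lemma sub_one_le_dz (u : ℝ) : u - 1 ≤ dz u := by
  have := sat_le_one u; unfold dz; linarith

lemma dz_pos_eq {u : ℝ} (h : 0 < dz u) : dz u = u - 1 := by
  unfold dz sat at *
  rcases le_total u 1 with h1 | h1
  · have : u ≤ max (min u 1) (-1) := le_trans (by simp [min_eq_left h1]) (le_max_left _ _)
    linarith
  · rw [min_eq_right h1, max_eq_left (by linarith)]

lemma dz_neg_sat {u : ℝ} (h : dz u < 0) : sat u = -1 := by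
  unfold dz sat at *
  rcases le_total (-1) u with h1 | h1
  · have hm : min u 1 ≤ u := min_le_left _ _
    have : max (min u 1) (-1) ≤ u := max_le hm h1
    linarith
  · rw [min_eq_left (by linarith), max_eq_right h1]

theorem stmt16 {n : ℕ} (M : Matrix (Fin n) (Fin n) ℝ) (w : Fin n → ℝ) (β t : ℝ)
    (u0 : Fin n → ℝ) (k : Fin n)
    (hM : ∀ i j, 0 ≤ M i j) (hrow : ∀ i, 0 < ∑ l, M i l) (hβ : 0 < β)
    (hw : ∀ i j, (M.mulVec w i - 1) / (∑ l, M i l) < (M.mulVec w j + 1) / (∑ l, M j l))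
    (hk : ∀ i, i ≠ k →
      |dz (M.mulVec w i)| / (∑ l, M i l) < |dz (M.mulVec w k)| / (∑ l, M k l))
    (hpos : 0 < dz (M.mulVec w k))
    (ht : t = β * ∑ l, dz (u0 l))
    (hsat : ∀ i, sat (u0 i) = -(M.mulVec w i) - (∑ l, M i l) * t)
    (hsign : (∀ i, 0 ≤ dz (u0 i)) ∨ (∀ i, dz (u0 i) ≤ 0)) :
    t = -(dz (M.mulVec w k) / (∑ l, M k l)) ∧ sat (u0 k) = -1 ∧
      ∀ i, i ≠ k → |sat (u0 i)| < 1 := by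
  set a : Fin n → ℝ := M.mulVec w with ha
  have hdzk : dz (a k) = a k - 1 := dz_pos_eq hpos
  have hak : 1 < a k := by linarith
  have habs : |dz (a k)| = a k - 1 := by rw [hdzk, abs_of_pos (by linarith)]
  -- from sat(u0 k) ≥ -1 :
  have hk1 : (∑ l, M k l) * t ≤ 1 - a k := by
    have h1 := neg_one_le_sat (u0 k)
    rw [hsat k] at h1; linarith
  have htneg : t < 0 := by
    by_contra h
    push_neg at h
    have := mul_nonneg (hrow k).le h
    linarith
  have hsum : ∑ l, dz (u0 l) < 0 := by
    by_contra h; push_neg at h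
    have : 0 ≤ β * ∑ l, dz (u0 l) := mul_nonneg hβ.le h
    rw [← ht] at this; linarith
  obtain ⟨l, hl⟩ : ∃ l, dz (u0 l) < 0 := by
    by_contra h; push_neg at h
    exact absurd (Finset.sum_nonneg fun l _ => h l) (not_le.mpr hsum)
  have hsatl : sat (u0 l) = -1 := dz_neg_sat hl
  have hlt : (∑ j, M l j) * t = 1 - a l := by
    rw [hsat l] at hsatl; linarith
  have hlk : l = k := by
    by_contra hne
    have h1 := hk l hne
    rw [habs] at h1
    have e1 : |dz (a l)| * (∑ j, M k j) < (a k - 1) * (∑ j, M l j) :=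
      (div_lt_div_iff₀ (hrow l) (hrow k)).mp h1
    have hB : a l - 1 ≤ |dz (a l)| := le_trans (sub_one_le_dz _) (le_abs_self _)
    nlinarith [mul_le_mul_of_nonneg_right hB (hrow k).le,
      mul_le_mul_of_nonneg_right hk1 (hrow l).le, hlt, e1]
  subst hlk
  have hgoal1 : t = -(dz (a l) / (∑ j, M l j)) := by
    rw [hdzk]
    have h2 : (a l - 1) / (∑ j, M l j) = -t := by
      rw [div_eq_iff (hrow l).ne']
      linarith
    rw [h2]; ring
  refine ⟨hgoal1, ?_, ?_⟩
  · rw [hsat l]; linarith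
  · intro i hi
    rw [hsat i, abs_lt]
    have h1 := hk i hi
    rw [habs] at h1
    have e1 : |dz (a i)| * (∑ j, M l j) < (a l - 1) * (∑ j, M i j) :=
      (div_lt_div_iff₀ (hrow i) (hrow l)).mp h1
    have hB : a i - 1 ≤ |dz (a i)| := le_trans (sub_one_le_dz _) (le_abs_self _)
    have hw1 := hw l i
    have e2 : (a l - 1) * (∑ j, M i j) < (a i + 1) * (∑ j, M l j) :=
      (div_lt_div_iff₀ (hrow l) (hrow i)).mp hw1
    constructor
    · nlinarith [e2, hlt, hrow l, hrow i]
    · nlinarith [e1, mul_le_mul_of_nonneg_right hB (hrow l).le, hlt, hrow l, hrow i]
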